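/- Let d ≥ 2 be an even integer and Θ = (X₁,X₂) a d-small symbol with defining intervals, right region [m+1, m+d/2] in row r, left region in row l = 3 − r, middle region of cardinality kd, and up-down diagram w = w₁⋯w_{d/2}. Let 1 ≤ p < q ≤ d/2 with w_p = ∧ and w_q = ∨, and let Θ' be the symbol obtained from Θ by replacing the bead m+p of row r by a bead at m+q, and replacing the bead m+q−kd−d/2 of row l by a bead at m+p−kd−d/2. Then Θ' is d-small with the same defining intervals, has the same charge and the same rank as Θ, its up-down diagram is obtained from w by exchanging the letters at positions p and q, and Θ' can be obtained from Θ by removing 2k+1 d/2-cohooks followed by 2k+1 operations inverse to d/2-cohook removals. In particular there exist d/2-cocores C of Θ and C' of Θ' with C' = C or C' obtained from C by interchanging its two rows. -/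

import Mathlib

open scoped Classical

/-- A β-set: a set of integers containing all sufficiently small integers
and no sufficiently large ones. -/
def IsBetaSet (X : Set ℤ) : Prop :=
  (∃ c : ℤ, ∀ z : ℤ, z < c → z ∈ X) ∧ (∃ C : ℤ, ∀ z : ℤ, C ≤ z → z ∉ X)

/-- `topB X = max X`. -/
noncomputable def topB (X : Set ℤ) : ℤ := sSup X

/-- `botB X = max {z | every integer < z lies in X}`. -/
noncomputable def botB (X : Set ℤ) : ℤ := sSup {z : ℤ | ∀ w : ℤ, w < z → w ∈ X}

/-- The charge `s(X)` of a β-set `X`, computed with the cutoff `c = botB X`. -/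
noncomputable def chargeB (X : Set ℤ) : ℤ :=
  ((X ∩ Set.Ici (botB X)).ncard : ℤ) + botB X - 1

/-- `elemSeq X j` is the `(j+1)`-st largest element of the β-set `X`. -/
noncomputable def elemSeq (X : Set ℤ) : ℕ → ℤ
  | 0 => sSup X
  | n + 1 => sSup (X ∩ Set.Iio (elemSeq X n))

/-- The partition `λ(X)` of a β-set `X`, `0`-indexed: `partB X j = λ_{j+1}`,
recovered from `x_j = s(X) + λ_j - j + 1` where `x_j` is the `j`-th largest element. -/
noncomputable def partB (X : Set ℤ) (j : ℕ) : ℕ :=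
  (elemSeq X j - chargeB X + j).toNat

/-- The size `|λ(X)|` of the partition of a β-set `X`. -/
noncomputable def sizeB (X : Set ℤ) : ℕ := ∑ᶠ j : ℕ, partB X j

/-- A partition, encoded as a weakly decreasing eventually zero function (0-indexed). -/
def IsPartition (μ : ℕ → ℕ) : Prop :=
  (∀ j, μ (j + 1) ≤ μ j) ∧ ∃ N, ∀ j, N ≤ j → μ j = 0

/-- The β-set `{s + λ_j - j + 1 : j ≥ 1}` of the partition `μ` with charge `s`. -/
def betaOf (μ : ℕ → ℕ) (s : ℤ) : Set ℤ :=
  {x : ℤ | ∃ j : ℕ, x = s + (μ j : ℤ) - (j : ℤ)}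

/-- The symbol `Θ = (X₁, X₂)` is `d`-small with defining intervals
`I₁ = [a₁,b₁]` and `I₂ = [a₂,b₂]`. -/
structure IsDSmallWith (d : ℤ) (X₁ X₂ : Set ℤ) (a₁ b₁ a₂ b₂ : ℤ) : Prop where
  len₁ : b₁ - a₁ = d / 2 - 1
  len₂ : b₂ - a₂ = d / 2 - 1
  bot₁ : a₁ ≤ botB X₁
  bot₂ : a₂ ≤ botB X₂
  top₁ : topB X₁ ≤ b₁
  top₂ : topB X₂ ≤ b₂
  cong : d ∣ b₂ - (b₁ + d / 2)

/-- The symbol `Θ = (X₁, X₂)` is `d`-small: it admits some pair of defining intervals. -/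
def IsDSmall (d : ℤ) (X₁ X₂ : Set ℤ) : Prop :=
  ∃ a₁ b₁ a₂ b₂ : ℤ, IsDSmallWith d X₁ X₂ a₁ b₁ a₂ b₂

/-- The row (`1` or `2`) containing the right region. -/
def rightRow (b₁ b₂ : ℤ) : ℕ := if b₁ < b₂ then 2 else 1

/-- The row, as a β-set, containing the right region. -/
def rightSet (X₁ X₂ : Set ℤ) (b₁ b₂ : ℤ) : Set ℤ := if b₁ < b₂ then X₂ else X₁

/-- The row, as a β-set, containing the left region. -/
def leftSet (X₁ X₂ : Set ℤ) (b₁ b₂ : ℤ) : Set ℤ := if b₁ < b₂ then X₁ else X₂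

/-- The cardinality `kd` of the middle region. -/
def middleLen (d b₁ b₂ : ℤ) : ℤ := |b₂ - b₁| - d / 2

/-- The alphabet `{∧, ∨, ×, ∘}` of up-down diagrams: `up = ∧`, `dn = ∨`,
`cross = ×`, `circ = ∘`. -/
inductive UD : Type
  | up
  | dn
  | cross
  | circ
deriving DecidableEq

/-- The up-down diagram `w_ud(Θ)` of a `d`-small symbol with defining intervals:
`wud d X₁ X₂ b₁ b₂ i` is the letter `w_i` for `1 ≤ i ≤ d/2`.  Here the right
region is `[m+1, m+d/2]` with `m = max b₁ b₂ - d/2`, `β_i = m + i`, and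
`β_i - kd - d/2 = β_i - |b₂ - b₁|`. -/
noncomputable def wud (d : ℤ) (X₁ X₂ : Set ℤ) (b₁ b₂ : ℤ) (i : ℤ) : UD :=
  if (max b₁ b₂ - d / 2 + i) ∈ rightSet X₁ X₂ b₁ b₂ then
    if (max b₁ b₂ - d / 2 + i) - |b₂ - b₁| ∈ leftSet X₁ X₂ b₁ b₂ then UD.cross else UD.up
  else
    if (max b₁ b₂ - d / 2 + i) - |b₂ - b₁| ∈ leftSet X₁ X₂ b₁ b₂ then UD.dn else UD.circ

/-- Removing an `e`-cohook in row `1` (the rows get interchanged afterwards). -/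
def RemoveCohookRow1 (e : ℤ) (Θ Θ' : Set ℤ × Set ℤ) : Prop :=
  ∃ x : ℤ, x ∈ Θ.1 ∧ x - e ∉ Θ.2 ∧ Θ' = (Θ.2 ∪ {x - e}, Θ.1 \ {x})

/-- Removing an `e`-cohook in row `2` (the rows get interchanged afterwards). -/
def RemoveCohookRow2 (e : ℤ) (Θ Θ' : Set ℤ × Set ℤ) : Prop :=
  ∃ x : ℤ, x ∈ Θ.2 ∧ x - e ∉ Θ.1 ∧ Θ' = (Θ.2 \ {x}, Θ.1 ∪ {x - e})

/-- Removing an `e`-cohook. -/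
def RemoveCohook (e : ℤ) (Θ Θ' : Set ℤ × Set ℤ) : Prop :=
  RemoveCohookRow1 e Θ Θ' ∨ RemoveCohookRow2 e Θ Θ'

/-- The symbol `Θ` has an `e`-cohook. -/
def HasCohook (e : ℤ) (Θ : Set ℤ × Set ℤ) : Prop :=
  (∃ x : ℤ, x ∈ Θ.1 ∧ x - e ∉ Θ.2) ∨ (∃ x : ℤ, x ∈ Θ.2 ∧ x - e ∉ Θ.1)

/-- `C` is an `e`-cocore of `Θ`: a symbol with no `e`-cohooks obtained from `Θ`
by a finite sequence of `e`-cohook removals. -/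
def IsCocoreOf (e : ℤ) (Θ C : Set ℤ × Set ℤ) : Prop :=
  Relation.ReflTransGen (RemoveCohook e) Θ C ∧ ¬ HasCohook e C

/-- The `n`-fold composition of a relation. -/
def RelPow {α : Type*} (R : α → α → Prop) : ℕ → α → α → Prop
  | 0 => Eq
  | n + 1 => fun a c => ∃ b, R a b ∧ RelPow R n b c

/-- `(a, b)` (row `a`, column `b`, both `1`-indexed) is a box of the partition `μ`
(`μ` is `0`-indexed, so `μ (a-1)` is the `a`-th part `λ_a`). -/
def IsBox (μ : ℕ → ℕ) (a b : ℕ) : Prop := 1 ≤ a ∧ 1 ≤ b ∧ b ≤ μ (a - 1)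

/-- `(a, b)` is an addable box of `μ`: adjoining it yields a partition. -/
def IsAddableBox (μ : ℕ → ℕ) (a b : ℕ) : Prop :=
  1 ≤ a ∧ b = μ (a - 1) + 1 ∧ (a = 1 ∨ b ≤ μ (a - 2))

/-- `(a, b)` is a removable box of `μ`: deleting it yields a partition. -/
def IsRemovableBox (μ : ℕ → ℕ) (a b : ℕ) : Prop :=
  1 ≤ a ∧ b = μ (a - 1) ∧ 1 ≤ b ∧ μ a < b

/-- The charged content `t + b - a` of the box in row `a` and column `b`,
with respect to the charge `t`. -/
def chCont (t : ℤ) (a b : ℕ) : ℤ := t + (b : ℤ) - (a : ℤ)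

/-- Selecting the component `j ∈ {1, 2}` of a bipartition. -/
def compPart (μ₁ μ₂ : ℕ → ℕ) (j : ℕ) : ℕ → ℕ := if j = 1 then μ₁ else μ₂

/-- Selecting the component `j ∈ {1, 2}` of a pair of charges. -/
def compT (t₁ t₂ : ℤ) (j : ℕ) : ℤ := if j = 1 then t₁ else t₂

/-- The box `(a, b)` in component `j` is a good removable `i`-box of the
bipartition `(μ₁, μ₂)` with charges `(t₁, t₂)`, where `r` is the row containing
the right region: it is a removable box of charged content `≡ i (mod d)` and
there is no addable box `A` of either component with charged content `≡ i (mod d)`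
such that either `A` has strictly larger charged content, or `A` has equal
charged content and lies in component `r`. -/
def IsGoodRemovableBox (d : ℤ) (μ₁ μ₂ : ℕ → ℕ) (t₁ t₂ : ℤ) (r : ℕ) (i : ℤ)
    (j a b : ℕ) : Prop :=
  (j = 1 ∨ j = 2) ∧ IsRemovableBox (compPart μ₁ μ₂ j) a b ∧
    d ∣ chCont (compT t₁ t₂ j) a b - i ∧
    ∀ j' a' b' : ℕ, (j' = 1 ∨ j' = 2) → IsAddableBox (compPart μ₁ μ₂ j') a' b' →
      d ∣ chCont (compT t₁ t₂ j') a' b' - i →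
      ¬ (chCont (compT t₁ t₂ j) a b < chCont (compT t₁ t₂ j') a' b' ∨
        (chCont (compT t₁ t₂ j') a' b' = chCont (compT t₁ t₂ j) a b ∧ j' = r))

/-- The position of a letter in the order `× < ∧ < ∨ < ∘`. -/
def udIdx : UD → ℕ
  | UD.cross => 0
  | UD.up => 1
  | UD.dn => 2
  | UD.circ => 3

/-- The word `w₁ ⋯ w_{d/2}` reads `×^α ∧^w ∨^h ∘^β`: all `×`'s first, then all
`∧`'s, then all `∨`'s, then all `∘`'s. -/
def SortedUD (d : ℤ) (w : ℤ → UD) : Prop :=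
  ∀ i j : ℤ, 1 ≤ i → i ≤ j → j ≤ d / 2 → udIdx (w i) ≤ udIdx (w j)

/-- The number of occurrences of the letter `u` in the word `w₁ ⋯ w_{d/2}`. -/
noncomputable def countUD (d : ℤ) (w : ℤ → UD) (u : UD) : ℕ :=
  ((Finset.Icc (1 : ℤ) (d / 2)).filter fun i => w i = u).card

/-- `w'` is obtained from `w` by permuting the letters `∧` and `∨` among the
positions carrying `∧` or `∨`, leaving every `×` and `∘` in place. -/
def PermUpDn (d : ℤ) (w w' : ℤ → UD) : Prop :=
  (∀ i : ℤ, 1 ≤ i → i ≤ d / 2 →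
    ((w' i = UD.cross ↔ w i = UD.cross) ∧ (w' i = UD.circ ↔ w i = UD.circ))) ∧
  countUD d w' UD.up = countUD d w UD.up

/-- Replace every letter `∧` by `∨`, leaving the other letters unchanged. -/
def replaceUp : UD → UD
  | UD.up => UD.dn
  | u => u


section Stmt13Aux

lemma betaBddAbove {X : Set ℤ} (hX : IsBetaSet X) : BddAbove X := by
  obtain ⟨C, hC⟩ := hX.2
  exact ⟨C, fun x hx => by by_contra h; exact hC x (by omega) hx⟩

lemma mem_le_topB {X : Set ℤ} (hX : IsBetaSet X) {x : ℤ} (hx : x ∈ X) : x ≤ topB X :=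
  le_csSup (betaBddAbove hX) hx

lemma notMem_of_topB_lt {X : Set ℤ} (hX : IsBetaSet X) {x : ℤ} (hx : topB X < x) : x ∉ X :=
  fun h => absurd (mem_le_topB hX h) (by omega)

lemma botS_bddAbove {X : Set ℤ} (hX : IsBetaSet X) :
    BddAbove {z : ℤ | ∀ w : ℤ, w < z → w ∈ X} := by
  obtain ⟨C, hC⟩ := hX.2
  refine ⟨C, fun z hz => ?_⟩
  by_contra h
  exact hC C le_rfl (hz C (by omega))

lemma le_botB {X : Set ℤ} (hX : IsBetaSet X) {a : ℤ} (ha : ∀ w : ℤ, w < a → w ∈ X) :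
    a ≤ botB X :=
  le_csSup (botS_bddAbove hX) ha

lemma botB_mem {X : Set ℤ} (hX : IsBetaSet X) : ∀ w : ℤ, w < botB X → w ∈ X := by
  obtain ⟨c, hc⟩ := hX.1
  exact Int.csSup_mem (s := {z : ℤ | ∀ w : ℤ, w < z → w ∈ X}) ⟨c, hc⟩ (botS_bddAbove hX)

lemma sSup_Iio_int (a : ℤ) : sSup (Set.Iio a) = a - 1 := by
  apply le_antisymm
  · exact csSup_le ⟨a - 1, by simp⟩ (fun x hx => by simp only [Set.mem_Iio] at hx; omega)
  · exact le_csSup ⟨a, fun x hx => le_of_lt hx⟩ (by simp)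

lemma elemSeq_Iio (c : ℤ) : ∀ j : ℕ, elemSeq (Set.Iio c) j = c - 1 - j := by
  intro j
  induction j with
  | zero => simpa [elemSeq] using sSup_Iio_int c
  | succ n ih =>
    show sSup (Set.Iio c ∩ Set.Iio (elemSeq (Set.Iio c) n)) = _
    rw [ih]
    have : Set.Iio c ∩ Set.Iio (c - 1 - (n : ℤ)) = Set.Iio (c - 1 - (n : ℤ)) := by
      ext x; simp only [Set.mem_inter_iff, Set.mem_Iio]; omega
    rw [this, sSup_Iio_int]
    push_cast; ring

lemma elemSeq_mem {X : Set ℤ} (hbdd : BddAbove X) {c : ℤ} (hc : ∀ w : ℤ, w < c → w ∈ X) :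
    ∀ j : ℕ, elemSeq X j ∈ X := by
  intro j
  cases j with
  | zero => exact Int.csSup_mem ⟨c - 1, hc _ (by omega)⟩ hbdd
  | succ n =>
    have hne : (X ∩ Set.Iio (elemSeq X n)).Nonempty := by
      refine ⟨min c (elemSeq X n) - 1, hc _ (by omega), by simp only [Set.mem_Iio]; omega⟩
    exact (Int.csSup_mem hne (hbdd.mono Set.inter_subset_left)).1

lemma elemSeq_shift {X : Set ℤ} (hbdd : BddAbove X) {c : ℤ} (hc : ∀ w : ℤ, w < c → w ∈ X) :
    ∀ j : ℕ, elemSeq (X ∩ Set.Iio (sSup X)) j = elemSeq X (j + 1) := by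
  have hbdd' : BddAbove (X ∩ Set.Iio (sSup X)) := hbdd.mono Set.inter_subset_left
  have hc' : ∀ w : ℤ, w < min c (sSup X) → w ∈ X ∩ Set.Iio (sSup X) :=
    fun w hw => ⟨hc w (by omega), by simp; omega⟩
  intro j
  induction j with
  | zero => rfl
  | succ n ih =>
    show sSup (X ∩ Set.Iio (sSup X) ∩ Set.Iio (elemSeq (X ∩ Set.Iio (sSup X)) n)) = _
    rw [ih]
    have hy : elemSeq X (n + 1) ∈ X := elemSeq_mem hbdd hc (n + 1)
    have hyt : elemSeq X (n + 1) ≤ sSup X := le_csSup hbdd hy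
    have : X ∩ Set.Iio (sSup X) ∩ Set.Iio (elemSeq X (n + 1))
        = X ∩ Set.Iio (elemSeq X (n + 1)) := by
      ext x
      simp only [Set.mem_inter_iff, Set.mem_Iio]
      constructor
      · rintro ⟨⟨h1, _⟩, h3⟩; exact ⟨h1, h3⟩
      · rintro ⟨h1, h3⟩; exact ⟨⟨h1, by omega⟩, h3⟩
    rw [this]
    rfl

lemma chargeB_eq {X : Set ℤ} (hX : IsBetaSet X) {c : ℤ} (hc : ∀ w : ℤ, w < c → w ∈ X)
    (hfin : (X ∩ Set.Ici c).Finite) :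
    chargeB X = ((X ∩ Set.Ici c).ncard : ℤ) + c - 1 := by
  have hcb : c ≤ botB X := le_botB hX hc
  have hsplit : X ∩ Set.Ici c = (X ∩ Set.Ici (botB X)) ∪ Set.Ico c (botB X) := by
    ext x
    simp only [Set.mem_inter_iff, Set.mem_Ici, Set.mem_union, Set.mem_Ico]
    constructor
    · rintro ⟨h1, h2⟩
      rcases le_or_gt (botB X) x with h | h
      · exact Or.inl ⟨h1, h⟩
      · exact Or.inr ⟨h2, h⟩
    · rintro (⟨h1, h2⟩ | ⟨h1, h2⟩)
      · exact ⟨h1, by omega⟩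
      · exact ⟨botB_mem hX x h2, h1⟩
  have hdisj : Disjoint (X ∩ Set.Ici (botB X)) (Set.Ico c (botB X)) := by
    rw [Set.disjoint_left]
    rintro x ⟨_, h2⟩ h3
    simp only [Set.mem_Ici] at h2
    simp only [Set.mem_Ico] at h3
    omega
  have hfin1 : (X ∩ Set.Ici (botB X)).Finite :=
    hfin.subset (fun x ⟨h1, h2⟩ => ⟨h1, by simp at h2 ⊢; omega⟩)
  have hfin2 : (Set.Ico c (botB X)).Finite := Set.finite_Ico _ _
  have hIco : (Set.Ico c (botB X)).ncard = (botB X - c).toNat := by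
    rw [← Finset.coe_Ico, Set.ncard_coe_finset, Int.card_Ico]
  have hcard := Set.ncard_union_eq hdisj hfin1 hfin2
  rw [hsplit, hcard, hIco]
  unfold chargeB
  push_cast
  omega


lemma isBetaSet_of_cut {X : Set ℤ} {c : ℤ} (hc : ∀ w : ℤ, w < c → w ∈ X)
    (hfin : (X ∩ Set.Ici c).Finite) : IsBetaSet X := by
  refine ⟨⟨c, hc⟩, ?_⟩
  obtain ⟨M, hM⟩ := hfin.bddAbove
  refine ⟨max c M + 1, fun z hz hzX => ?_⟩
  have : z ∈ X ∩ Set.Ici c := ⟨hzX, by simp; omega⟩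
  have := hM this
  simp at hz ⊢
  omega

lemma sizeKey (n : ℕ) : ∀ (X : Set ℤ) (c : ℤ), (∀ w : ℤ, w < c → w ∈ X) →
    ∀ (hfin : (X ∩ Set.Ici c).Finite), (X ∩ Set.Ici c).ncard = n →
    (∀ j : ℕ, n ≤ j → elemSeq X j = c - 1 - ((j : ℤ) - n)) ∧
    ((sizeB X : ℤ) =
      (∑ x ∈ hfin.toFinset, x) - ∑ j ∈ Finset.range n, ((n : ℤ) + c - 1 - j)) := by
  induction n with
  | zero =>
    intro X c hc hfin hcard
    have hXeq : X = Set.Iio c := by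
      ext x
      constructor
      · intro hx
        by_contra h
        simp only [Set.mem_Iio, not_lt] at h
        have : x ∈ X ∩ Set.Ici c := ⟨hx, h⟩
        rw [Set.ncard_eq_zero hfin] at hcard
        simp [hcard] at this
      · intro hx; exact hc x hx
    subst hXeq
    have hes : ∀ j : ℕ, elemSeq (Set.Iio c) j = c - 1 - j := elemSeq_Iio c
    constructor
    · intro j _; rw [hes j]; push_cast; ring
    · have hch : chargeB (Set.Iio c) = c - 1 := by
        rw [chargeB_eq (isBetaSet_of_cut hc hfin) hc hfin, hcard]; push_cast; ring
      have hp0 : ∀ j : ℕ, partB (Set.Iio c) j = 0 := by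
        intro j; unfold partB; rw [hes j, hch]; omega
      have : sizeB (Set.Iio c) = 0 := by
        unfold sizeB
        have : (fun j : ℕ => partB (Set.Iio c) j) = fun _ => 0 := funext hp0
        rw [this, finsum_zero]
      rw [this]
      have hempty : hfin.toFinset = ∅ := by
        simp only [Finset.eq_empty_iff_forall_notMem, Set.Finite.mem_toFinset]
        rw [Set.ncard_eq_zero hfin] at hcard
        simp [hcard]
      rw [hempty]
      simp
  | succ n ih =>
    intro X c hc hfin hcard
    have hbeta : IsBetaSet X := isBetaSet_of_cut hc hfin
    have hbdd : BddAbove X := betaBddAbove hbeta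
    set t := sSup X with ht
    have hne : (X ∩ Set.Ici c).Nonempty := Set.nonempty_of_ncard_ne_zero (by omega)
    have htX : t ∈ X := Int.csSup_mem ⟨c - 1, hc _ (by omega)⟩ hbdd
    have hct : c ≤ t := by
      obtain ⟨x, hx1, hx2⟩ := hne
      have := le_csSup hbdd hx1
      simp only [Set.mem_Ici] at hx2
      omega
    set X' := X ∩ Set.Iio t with hX'
    have hc' : ∀ w : ℤ, w < c → w ∈ X' := fun w hw => ⟨hc w hw, by simp only [Set.mem_Iio]; omega⟩
    have hins : X ∩ Set.Ici c = insert t (X' ∩ Set.Ici c) := by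
      ext x
      simp only [Set.mem_insert_iff, Set.mem_inter_iff, Set.mem_Ici, Set.mem_Iio, hX']
      constructor
      · rintro ⟨h1, h2⟩
        rcases eq_or_lt_of_le (le_csSup hbdd h1) with h | h
        · exact Or.inl h
        · exact Or.inr ⟨⟨h1, h⟩, h2⟩
      · rintro (rfl | ⟨⟨h1, _⟩, h3⟩)
        · exact ⟨htX, hct⟩
        · exact ⟨h1, h3⟩
    have hfin' : (X' ∩ Set.Ici c).Finite :=
      hfin.subset (by rintro x ⟨⟨h1, _⟩, h2⟩; exact ⟨h1, h2⟩)
    have htnot : t ∉ X' ∩ Set.Ici c := by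
      rintro ⟨⟨_, h⟩, _⟩; simp only [Set.mem_Iio] at h; omega
    have hcard' : (X' ∩ Set.Ici c).ncard = n := by
      have := Set.ncard_insert_of_notMem htnot hfin'
      rw [← hins, hcard] at this
      omega
    obtain ⟨ih1, ih2⟩ := ih X' c hc' hfin' hcard'
    have hch : chargeB X = (n : ℤ) + c := by
      rw [chargeB_eq hbeta hc hfin, hcard]; push_cast; ring
    have hbeta' : IsBetaSet X' := isBetaSet_of_cut hc' hfin'
    have hch' : chargeB X' = (n : ℤ) + c - 1 := by
      rw [chargeB_eq hbeta' hc' hfin', hcard']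
    have hsh : ∀ j : ℕ, elemSeq X' j = elemSeq X (j + 1) := elemSeq_shift hbdd hc
    -- conjunct 1
    have hcj1 : ∀ j : ℕ, n + 1 ≤ j → elemSeq X j = c - 1 - ((j : ℤ) - (n + 1)) := by
      intro j hj
      obtain ⟨j', rfl⟩ : ∃ j', j = j' + 1 := ⟨j - 1, by omega⟩
      rw [← hsh j', ih1 j' (by omega)]
      push_cast; ring
    refine ⟨by intro j hj; rw [hcj1 j (by exact_mod_cast hj)]; push_cast; ring, ?_⟩
    -- t ≥ n + c
    have htlow : (n : ℤ) + c ≤ t := by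
      have hsub : X ∩ Set.Ici c ⊆ Set.Icc c t := by
        rintro x ⟨h1, h2⟩
        exact ⟨by simpa using h2, le_csSup hbdd h1⟩
      have hle := Set.ncard_le_ncard hsub (Set.finite_Icc _ _)
      have hicc : (Set.Icc c t).ncard = (t + 1 - c).toNat := by
        rw [← Finset.coe_Icc, Set.ncard_coe_finset, Int.card_Icc]
      rw [hcard, hicc] at hle
      omega
    -- partB relations
    have hpart0 : (partB X 0 : ℤ) = t - ((n : ℤ) + c) := by
      unfold partB
      have h0 : elemSeq X 0 = t := rfl
      rw [h0, hch]
      push_cast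
      omega
    have hpartS : ∀ j : ℕ, partB X (j + 1) = partB X' j := by
      intro j
      unfold partB
      rw [← hsh j, hch, hch']
      congr 1
      push_cast
      ring
    -- support bounds
    have hsupX : Function.support (partB X) ⊆ ↑(Finset.range (n + 1 + 1)) := by
      intro j hj
      simp only [Finset.coe_range, Set.mem_Iio]
      by_contra h
      apply hj
      unfold partB
      rw [hcj1 j (by omega), hch]
      omega
    have hsupX' : Function.support (partB X') ⊆ ↑(Finset.range (n + 1)) := by
      intro j hj
      simp only [Finset.coe_range, Set.mem_Iio]
      by_contra h
      apply hj
      unfold partB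
      rw [ih1 j (by omega), hch']
      omega
    have hsizeX : sizeB X = ∑ j ∈ Finset.range (n + 1 + 1), partB X j :=
      finsum_eq_sum_of_support_subset _ hsupX
    have hsizeX' : sizeB X' = ∑ j ∈ Finset.range (n + 1), partB X' j :=
      finsum_eq_sum_of_support_subset _ hsupX'
    have hsplitsum : ∑ j ∈ Finset.range (n + 1 + 1), partB X j
        = (∑ j ∈ Finset.range (n + 1), partB X' j) + partB X 0 := by
      rw [Finset.sum_range_succ']
      congr 1
      exact Finset.sum_congr rfl (fun j _ => hpartS j)
    -- sums over the beta set
    have hTF : hfin.toFinset = insert t hfin'.toFinset := by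
      ext x
      simp only [Set.Finite.mem_toFinset, Finset.mem_insert, hins, Set.mem_insert_iff]
    have hsum : (∑ x ∈ hfin.toFinset, x) = t + ∑ x ∈ hfin'.toFinset, x := by
      rw [hTF, Finset.sum_insert (by simpa [Set.Finite.mem_toFinset] using htnot)]
    -- staircase
    have hstair : ∑ j ∈ Finset.range (n + 1), (((n : ℤ) + 1) + c - 1 - j)
        = ((n : ℤ) + c) + ∑ j ∈ Finset.range n, ((n : ℤ) + c - 1 - j) := by
      rw [Finset.sum_range_succ']
      have : ∀ j ∈ Finset.range n, ((n : ℤ) + 1) + c - 1 - (j + 1 : ℕ) = (n : ℤ) + c - 1 - j := by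
        intro j _; push_cast; ring
      rw [Finset.sum_congr rfl this]
      ring
    have : (sizeB X : ℤ) = (sizeB X' : ℤ) + (t - ((n : ℤ) + c)) := by
      rw [hsizeX, hsplitsum]
      push_cast
      rw [hsizeX'] at *
      push_cast
      omega
    rw [this, ih2]
    push_cast at hstair ⊢
    rw [hsum]
    omega


lemma charge_size_swap {X : Set ℤ} (hX : IsBetaSet X) {u v : ℤ} (hu : u ∈ X) (hv : v ∉ X) :
    chargeB ((X \ {u}) ∪ {v}) = chargeB X ∧
    ((sizeB ((X \ {u}) ∪ {v}) : ℤ) + u = (sizeB X : ℤ) + v) := by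
  set Y := (X \ {u}) ∪ {v} with hY
  set c := min (min u v) (botB X) with hcdef
  have hcu : c ≤ u := by omega
  have hcv : c ≤ v := by omega
  have hcX : ∀ w : ℤ, w < c → w ∈ X := fun w hw => botB_mem hX w (by omega)
  have hcY : ∀ w : ℤ, w < c → w ∈ Y := fun w hw =>
    Or.inl ⟨hcX w hw, by simp only [Set.mem_singleton_iff]; omega⟩
  have hfinX : (X ∩ Set.Ici c).Finite := by
    apply (Set.finite_Icc c (topB X)).subset
    rintro x ⟨h1, h2⟩
    exact ⟨by simpa using h2, mem_le_topB hX h1⟩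
  have huX : u ∈ X ∩ Set.Ici c := ⟨hu, by simpa using hcu⟩
  have hYX : Y ∩ Set.Ici c = insert v ((X ∩ Set.Ici c) \ {u}) := by
    ext x
    simp only [hY, Set.mem_insert_iff, Set.mem_inter_iff, Set.mem_Ici, Set.mem_union,
      Set.mem_diff, Set.mem_singleton_iff]
    constructor
    · rintro ⟨h1 | rfl, h2⟩
      · exact Or.inr ⟨⟨h1.1, h2⟩, h1.2⟩
      · exact Or.inl rfl
    · rintro (rfl | ⟨⟨h1, h2⟩, h3⟩)
      · exact ⟨Or.inr rfl, by simpa using hcv⟩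
      · exact ⟨Or.inl ⟨h1, h3⟩, h2⟩
  have hfinY : (Y ∩ Set.Ici c).Finite := by
    rw [hYX]; exact ((hfinX.subset Set.diff_subset).insert v)
  have hvnot : v ∉ (X ∩ Set.Ici c) \ {u} := fun h => hv h.1.1
  have hYTF : hfinY.toFinset = insert v (hfinX.toFinset.erase u) := by
    ext x
    simp only [Set.Finite.mem_toFinset, Finset.mem_insert, Finset.mem_erase,
      Set.Finite.mem_toFinset, hYX, Set.mem_insert_iff, Set.mem_diff, Set.mem_singleton_iff]
    tauto
  have huTF : u ∈ hfinX.toFinset := by simpa [Set.Finite.mem_toFinset] using huX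
  set n := (X ∩ Set.Ici c).ncard with hn
  have hcardX : (X ∩ Set.Ici c).ncard = n := rfl
  have hcardY : (Y ∩ Set.Ici c).ncard = n := by
    rw [hYX, Set.ncard_insert_of_notMem hvnot (hfinX.subset Set.diff_subset),
      Set.ncard_diff_singleton_of_mem huX]
    have : 1 ≤ n := Set.ncard_pos hfinX |>.2 ⟨u, huX⟩
    omega
  have hsumY : (∑ x ∈ hfinY.toFinset, x) = (∑ x ∈ hfinX.toFinset, x) - u + v := by
    rw [hYTF, Finset.sum_insert (by
      simp only [Finset.mem_erase, Set.Finite.mem_toFinset]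
      rintro ⟨-, h, -⟩
      exact hv h)]
    rw [Finset.sum_erase_eq_sub huTF]
    ring
  obtain ⟨-, hszX⟩ := sizeKey n X c hcX hfinX hcardX
  obtain ⟨-, hszY⟩ := sizeKey n Y c hcY hfinY hcardY
  have hbY : IsBetaSet Y := by
    refine ⟨⟨c, hcY⟩, ?_⟩
    obtain ⟨C, hC⟩ := hX.2
    refine ⟨max C (v + 1), fun z hz => ?_⟩
    simp only [max_le_iff] at hz
    rintro (⟨h1, -⟩ | h1)
    · exact hC z (by omega) h1
    · simp only [Set.mem_singleton_iff] at h1; omega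
  constructor
  · rw [chargeB_eq hX hcX hfinX, chargeB_eq hbY hcY hfinY, hcardX, hcardY]
  · rw [hszX, hszY, hsumY]; ring


section RelPowAux
variable {α : Type*} {R : α → α → Prop}

lemma relPow_chain : ∀ (n : ℕ) (f : ℕ → α), (∀ s, s < n → R (f s) (f (s + 1))) →
    RelPow R n (f 0) (f n)
  | 0, f, _ => rfl
  | (n + 1), f, h =>
    ⟨f 1, h 0 (Nat.succ_pos n),
      relPow_chain n (fun s => f (s + 1)) (fun s hs => h (s + 1) (by omega))⟩

lemma relPow_snoc : ∀ {n : ℕ} {a b c : α}, RelPow R n a b → R b c → RelPow R (n + 1) a c := by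
  intro n
  induction n with
  | zero => intro a b c h hbc; cases h; exact ⟨c, hbc, rfl⟩
  | succ n ih =>
    rintro a b c ⟨x, hax, hx⟩ hbc
    exact ⟨x, hax, ih hx hbc⟩

lemma relPow_rev : ∀ {n : ℕ} {a b : α}, RelPow R n a b → RelPow (fun x y => R y x) n b a := by
  intro n
  induction n with
  | zero => intro a b h; cases h; rfl
  | succ n ih =>
    rintro a b ⟨x, hax, hx⟩
    exact relPow_snoc (ih hx) hax

lemma relPow_reflTransGen : ∀ {n : ℕ} {a b : α}, RelPow R n a b → Relation.ReflTransGen R a b := by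
  intro n
  induction n with
  | zero => intro a b h; cases h; rfl
  | succ n ih =>
    rintro a b ⟨x, hax, hx⟩
    exact Relation.ReflTransGen.head hax (ih hx)

end RelPowAux

lemma cascade (e : ℤ) (he : 1 ≤ e) (k : ℕ) (A B : Set ℤ) (z : ℕ → ℤ)
    (hz : ∀ c : ℕ, z c = z 0 - (c : ℤ) * e)
    (h0 : z 0 ∈ A)
    (hA : ∀ c : ℕ, 1 ≤ c → c ≤ 2 * k + 1 → z c ∈ A)
    (hB : ∀ c : ℕ, 1 ≤ c → c ≤ 2 * k + 1 → z c ∉ B) :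
    RelPow (RemoveCohook e) (2 * k + 1) (A, B) (B ∪ {z (2 * k + 1)}, A \ {z 0}) ∧
    RelPow (RemoveCohook e) (2 * k + 1) (B, A) (A \ {z 0}, B ∪ {z (2 * k + 1)}) := by
  have hzlt : ∀ c c' : ℕ, c < c' → z c' < z c := by
    intro c c' h
    rw [hz c, hz c']
    have hcc : (c : ℤ) < (c' : ℤ) := by exact_mod_cast h
    nlinarith
  have hzne : ∀ c c' : ℕ, c < c' → z c' ≠ z c := fun c c' h => ne_of_lt (hzlt c c' h)
  have hze : ∀ c : ℕ, z c - e = z (c + 1) := by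
    intro c; rw [hz c, hz (c + 1)]; push_cast; ring
  set F : ℕ → Set ℤ × Set ℤ := fun s =>
    if s = 0 then (A, B)
    else if s % 2 = 1 then (A \ {z 0}, B ∪ {z s})
    else ((A \ {z 0}) \ {z s}, (B ∪ {z (s - 1)}) ∪ {z (s + 1)}) with hF
  -- the two orientations
  set G : ℕ → Set ℤ × Set ℤ := fun s => if s % 2 = 0 then F s else ((F s).2, (F s).1) with hG
  set G' : ℕ → Set ℤ × Set ℤ := fun s => if s % 2 = 0 then ((F s).2, (F s).1) else F s with hG'
  have hstep : ∀ s, s < 2 * k + 1 →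
      RemoveCohook e (G s) (G (s + 1)) ∧ RemoveCohook e (G' s) (G' (s + 1)) := by
    intro s hs
    rcases Nat.eq_zero_or_pos s with rfl | hs0
    · -- s = 0
      have hF0 : F 0 = (A, B) := by simp [hF]
      have hF1 : F 1 = (A \ {z 0}, B ∪ {z 1}) := by simp [hF]
      have hG0 : G 0 = (A, B) := by simp [hG, hF0]
      have hG1 : G 1 = (B ∪ {z 1}, A \ {z 0}) := by simp [hG, hF1]
      have hG'0 : G' 0 = (B, A) := by simp [hG', hF0]
      have hG'1 : G' 1 = (A \ {z 0}, B ∪ {z 1}) := by simp [hG', hF1]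
      have hnB : z 0 - e ∉ B := by rw [hze 0]; exact hB 1 le_rfl (by omega)
      constructor
      · rw [hG0, hG1]
        exact Or.inl ⟨z 0, h0, hnB, by rw [hze 0]⟩
      · rw [hG'0, hG'1]
        exact Or.inr ⟨z 0, h0, hnB, by rw [hze 0]⟩
    rcases Nat.even_or_odd s with hpar | hpar
    · -- s even, s ≥ 2 : move z (s-1) from the L-part, filling the hole at z s
      have hs2 : s % 2 = 0 := Nat.even_iff.1 hpar
      have hs2' : s ≥ 2 := by omega
      have hFs : F s = ((A \ {z 0}) \ {z s}, (B ∪ {z (s - 1)}) ∪ {z (s + 1)}) := by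
        simp only [hF]
        rw [if_neg (by omega), if_neg (by omega)]
      have hFs1 : F (s + 1) = (A \ {z 0}, B ∪ {z (s + 1)}) := by
        have : (s + 1) % 2 = 1 := by omega
        simp [hF, this]
      have hxmem : z (s - 1) ∈ (B ∪ {z (s - 1)}) ∪ {z (s + 1)} := Or.inl (Or.inr rfl)
      have hxe : z (s - 1) - e = z s := by
        have := hze (s - 1); rwa [Nat.sub_add_cancel (by omega)] at this
      have hxnot : z (s - 1) - e ∉ (A \ {z 0}) \ {z s} := by
        rw [hxe]; rintro ⟨-, h⟩; exact h rfl
      have he1 : ((A \ {z 0}) \ {z s}) ∪ {z (s - 1) - e} = A \ {z 0} := by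
        rw [hxe]
        ext y
        simp only [Set.mem_union, Set.mem_diff, Set.mem_singleton_iff]
        constructor
        · rintro (⟨h1, -⟩ | rfl)
          · exact h1
          · exact ⟨hA s (by omega) (by omega), hzne 0 s (by omega)⟩
        · intro h1
          by_cases hy : y = z s
          · exact Or.inr hy
          · exact Or.inl ⟨h1, hy⟩
      have he2 : ((B ∪ {z (s - 1)}) ∪ {z (s + 1)}) \ {z (s - 1)} = B ∪ {z (s + 1)} := by
        ext y
        simp only [Set.mem_union, Set.mem_diff, Set.mem_singleton_iff]
        constructor
        · rintro ⟨(h1 | rfl) | h1, h2⟩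
          · exact Or.inl h1
          · exact absurd rfl h2
          · exact Or.inr h1
        · rintro (h1 | rfl)
          · exact ⟨Or.inl (Or.inl h1), fun hy => hB (s - 1) (by omega) (by omega) (hy ▸ h1)⟩
          · exact ⟨Or.inr rfl, hzne (s - 1) (s + 1) (by omega)⟩
      constructor
      · -- G s = F s ; G (s+1) = swap (F (s+1))
        have hGs : G s = F s := by simp [hG, hs2]
        have hGs1 : G (s + 1) = ((F (s + 1)).2, (F (s + 1)).1) := by
          have : (s + 1) % 2 = 1 := by omega
          simp [hG, this]
        rw [hGs, hGs1, hFs, hFs1]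
        exact Or.inr ⟨z (s - 1), hxmem, hxnot, by rw [he1, he2]⟩
      · have hGs : G' s = ((F s).2, (F s).1) := by simp [hG', hs2]
        have hGs1 : G' (s + 1) = F (s + 1) := by
          have : (s + 1) % 2 = 1 := by omega
          simp [hG', this]
        rw [hGs, hGs1, hFs, hFs1]
        exact Or.inl ⟨z (s - 1), hxmem, hxnot, by rw [he1, he2]⟩
    · -- s odd : move z (s+1) from the R-part down to z (s+2)
      have hs2 : s % 2 = 1 := Nat.odd_iff.1 hpar
      have hsle : s + 2 ≤ 2 * k + 1 := by omega
      have hFs : F s = (A \ {z 0}, B ∪ {z s}) := by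
        simp only [hF]
        rw [if_neg (by omega), if_pos hs2]
      have hFs1 : F (s + 1) = ((A \ {z 0}) \ {z (s + 1)}, (B ∪ {z s}) ∪ {z (s + 2)}) := by
        have h1 : (s + 1) % 2 = 0 := by omega
        have h2 : s + 1 ≠ 0 := by omega
        have h3 : s + 1 - 1 = s := by omega
        simp [hF, h1, h2, h3]
      have hxmem : z (s + 1) ∈ A \ {z 0} :=
        ⟨hA (s + 1) (by omega) (by omega), hzne 0 (s + 1) (by omega)⟩
      have hxe : z (s + 1) - e = z (s + 2) := hze (s + 1)
      have hxnot : z (s + 1) - e ∉ B ∪ {z s} := by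
        rw [hxe]
        rintro (h | h)
        · exact hB (s + 2) (by omega) hsle h
        · exact hzne s (s + 2) (by omega) (by simpa using h)
      constructor
      · have hGs : G s = ((F s).2, (F s).1) := by simp [hG, hs2]
        have hGs1 : G (s + 1) = F (s + 1) := by
          have : (s + 1) % 2 = 0 := by omega
          simp [hG, this]
        rw [hGs, hGs1, hFs, hFs1]
        exact Or.inr ⟨z (s + 1), hxmem, hxnot, by rw [hxe]⟩
      · have hGs : G' s = F s := by simp [hG', hs2]
        have hGs1 : G' (s + 1) = ((F (s + 1)).2, (F (s + 1)).1) := by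
          have : (s + 1) % 2 = 0 := by omega
          simp [hG', this]
        rw [hGs, hGs1, hFs, hFs1]
        exact Or.inl ⟨z (s + 1), hxmem, hxnot, by rw [hxe]⟩
  have hend : F (2 * k + 1) = (A \ {z 0}, B ∪ {z (2 * k + 1)}) := by
    have h1 : (2 * k + 1) % 2 = 1 := by omega
    simp [hF, h1]
  constructor
  · have := relPow_chain (2 * k + 1) G (fun s hs => (hstep s hs).1)
    have hG0 : G 0 = (A, B) := by simp [hG, hF]
    have hGend : G (2 * k + 1) = (B ∪ {z (2 * k + 1)}, A \ {z 0}) := by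
      have h1 : ¬((2 * k + 1) % 2 = 0) := by omega
      simp only [hG, if_neg h1, hend]
    rwa [hG0, hGend] at this
  · have := relPow_chain (2 * k + 1) G' (fun s hs => (hstep s hs).2)
    have hG0 : G' 0 = (B, A) := by simp [hG', hF]
    have hGend : G' (2 * k + 1) = (A \ {z 0}, B ∪ {z (2 * k + 1)}) := by
      have h1 : ¬((2 * k + 1) % 2 = 0) := by omega
      simp only [hG', if_neg h1, hend]
    rwa [hG0, hGend] at this


noncomputable def wtB (c : ℤ) (S : Set ℤ) : ℕ := ∑ᶠ x ∈ S ∩ Set.Ici c, (x - c).toNat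

lemma wtB_eq (c : ℤ) (S : Set ℤ) (h : (S ∩ Set.Ici c).Finite) :
    wtB c S = ∑ x ∈ h.toFinset, (x - c).toNat :=
  finsum_mem_eq_finite_toFinset_sum _ h

lemma cocore_exists (e : ℤ) (he : 1 ≤ e) (c : ℤ) :
    ∀ (N : ℕ) (Θ : Set ℤ × Set ℤ),
      (∀ w : ℤ, w < c → w ∈ Θ.1 ∧ w ∈ Θ.2) →
      (Θ.1 ∩ Set.Ici c).Finite → (Θ.2 ∩ Set.Ici c).Finite →
      wtB c Θ.1 + wtB c Θ.2 ≤ N →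
      ∃ C, IsCocoreOf e Θ C := by
  intro N
  induction N with
  | zero =>
    intro Θ hinv hf1 hf2 hwt
    by_cases hch : HasCohook e Θ
    · exfalso
      -- a cohook forces positive weight
      rcases hch with ⟨x, hx1, hx2⟩ | ⟨x, hx1, hx2⟩
      · have hxe : c ≤ x - e := by
          by_contra h
          exact hx2 (hinv (x - e) (by omega)).2
        have hxm : x ∈ hf1.toFinset := by
          simp only [Set.Finite.mem_toFinset]
          exact ⟨hx1, by simp; omega⟩
        have : (x - c).toNat ≤ wtB c Θ.1 := by
          rw [wtB_eq c Θ.1 hf1]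
          exact Finset.single_le_sum (f := fun y => (y - c).toNat) (fun i _ => Nat.zero_le _) hxm
        omega
      · have hxe : c ≤ x - e := by
          by_contra h
          exact hx2 (hinv (x - e) (by omega)).1
        have hxm : x ∈ hf2.toFinset := by
          simp only [Set.Finite.mem_toFinset]
          exact ⟨hx1, by simp; omega⟩
        have : (x - c).toNat ≤ wtB c Θ.2 := by
          rw [wtB_eq c Θ.2 hf2]
          exact Finset.single_le_sum (f := fun y => (y - c).toNat) (fun i _ => Nat.zero_le _) hxm
        omega
    · exact ⟨Θ, Relation.ReflTransGen.refl, hch⟩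
  | succ N ih =>
    intro Θ hinv hf1 hf2 hwt
    by_cases hch : HasCohook e Θ
    · rcases hch with ⟨x, hx1, hx2⟩ | ⟨x, hx1, hx2⟩
      · -- row 1 cohook
        have hxe : c ≤ x - e := by
          by_contra h
          exact hx2 (hinv (x - e) (by omega)).2
        set Θ' : Set ℤ × Set ℤ := (Θ.2 ∪ {x - e}, Θ.1 \ {x}) with hΘ'
        have hinv' : ∀ w : ℤ, w < c → w ∈ Θ'.1 ∧ w ∈ Θ'.2 := by
          intro w hw
          exact ⟨Or.inl (hinv w hw).2,
            ⟨(hinv w hw).1, by simp only [Set.mem_singleton_iff]; omega⟩⟩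
        have hT1 : Θ'.1 ∩ Set.Ici c = insert (x - e) (Θ.2 ∩ Set.Ici c) := by
          ext y
          simp only [hΘ', Set.mem_insert_iff, Set.mem_inter_iff, Set.mem_Ici, Set.mem_union,
            Set.mem_singleton_iff]
          constructor
          · rintro ⟨h1 | rfl, h2⟩
            · exact Or.inr ⟨h1, h2⟩
            · exact Or.inl rfl
          · rintro (rfl | ⟨h1, h2⟩)
            · exact ⟨Or.inr rfl, hxe⟩
            · exact ⟨Or.inl h1, h2⟩
        have hT2 : Θ'.2 ∩ Set.Ici c = (Θ.1 ∩ Set.Ici c) \ {x} := by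
          ext y
          simp only [hΘ', Set.mem_inter_iff, Set.mem_Ici, Set.mem_diff, Set.mem_singleton_iff]
          tauto
        have hf1' : (Θ'.1 ∩ Set.Ici c).Finite := by rw [hT1]; exact hf2.insert _
        have hf2' : (Θ'.2 ∩ Set.Ici c).Finite := by rw [hT2]; exact hf1.diff
        have hxm : x ∈ hf1.toFinset := by
          simp only [Set.Finite.mem_toFinset]
          exact ⟨hx1, by simp; omega⟩
        have hw1 : wtB c Θ'.1 = wtB c Θ.2 + (x - e - c).toNat := by
          rw [wtB_eq c Θ'.1 hf1', wtB_eq c Θ.2 hf2]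
          have hTF : hf1'.toFinset = insert (x - e) hf2.toFinset := by
            ext y
            simp only [Set.Finite.mem_toFinset, Finset.mem_insert, hT1, Set.mem_insert_iff]
          rw [hTF, Finset.sum_insert (by
            simp only [Set.Finite.mem_toFinset]
            rintro ⟨h, -⟩
            exact hx2 h)]
          ring
        have hw2 : wtB c Θ'.2 + (x - c).toNat = wtB c Θ.1 := by
          rw [wtB_eq c Θ'.2 hf2', wtB_eq c Θ.1 hf1]
          have hTF : hf2'.toFinset = hf1.toFinset.erase x := by
            ext y
            simp only [Set.Finite.mem_toFinset, Finset.mem_erase, hT2, Set.mem_diff,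
              Set.mem_singleton_iff]
            tauto
          rw [hTF]
          exact Finset.sum_erase_add _ _ hxm
        have hwt' : wtB c Θ'.1 + wtB c Θ'.2 ≤ N := by omega
        obtain ⟨C, hC1, hC2⟩ := ih Θ' hinv' hf1' hf2' hwt'
        exact ⟨C, Relation.ReflTransGen.head (Or.inl ⟨x, hx1, hx2, rfl⟩) hC1, hC2⟩
      · -- row 2 cohook
        have hxe : c ≤ x - e := by
          by_contra h
          exact hx2 (hinv (x - e) (by omega)).1
        set Θ' : Set ℤ × Set ℤ := (Θ.2 \ {x}, Θ.1 ∪ {x - e}) with hΘ'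
        have hinv' : ∀ w : ℤ, w < c → w ∈ Θ'.1 ∧ w ∈ Θ'.2 := by
          intro w hw
          exact ⟨⟨(hinv w hw).2, by simp only [Set.mem_singleton_iff]; omega⟩,
            Or.inl (hinv w hw).1⟩
        have hT1 : Θ'.1 ∩ Set.Ici c = (Θ.2 ∩ Set.Ici c) \ {x} := by
          ext y
          simp only [hΘ', Set.mem_inter_iff, Set.mem_Ici, Set.mem_diff, Set.mem_singleton_iff]
          tauto
        have hT2 : Θ'.2 ∩ Set.Ici c = insert (x - e) (Θ.1 ∩ Set.Ici c) := by
          ext y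
          simp only [hΘ', Set.mem_insert_iff, Set.mem_inter_iff, Set.mem_Ici, Set.mem_union,
            Set.mem_singleton_iff]
          constructor
          · rintro ⟨h1 | rfl, h2⟩
            · exact Or.inr ⟨h1, h2⟩
            · exact Or.inl rfl
          · rintro (rfl | ⟨h1, h2⟩)
            · exact ⟨Or.inr rfl, hxe⟩
            · exact ⟨Or.inl h1, h2⟩
        have hf1' : (Θ'.1 ∩ Set.Ici c).Finite := by rw [hT1]; exact hf2.diff
        have hf2' : (Θ'.2 ∩ Set.Ici c).Finite := by rw [hT2]; exact hf1.insert _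
        have hxm : x ∈ hf2.toFinset := by
          simp only [Set.Finite.mem_toFinset]
          exact ⟨hx1, by simp; omega⟩
        have hw1 : wtB c Θ'.1 + (x - c).toNat = wtB c Θ.2 := by
          rw [wtB_eq c Θ'.1 hf1', wtB_eq c Θ.2 hf2]
          have hTF : hf1'.toFinset = hf2.toFinset.erase x := by
            ext y
            simp only [Set.Finite.mem_toFinset, Finset.mem_erase, hT1, Set.mem_diff,
              Set.mem_singleton_iff]
            tauto
          rw [hTF]
          exact Finset.sum_erase_add _ _ hxm
        have hw2 : wtB c Θ'.2 = wtB c Θ.1 + (x - e - c).toNat := by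
          rw [wtB_eq c Θ'.2 hf2', wtB_eq c Θ.1 hf1]
          have hTF : hf2'.toFinset = insert (x - e) hf1.toFinset := by
            ext y
            simp only [Set.Finite.mem_toFinset, Finset.mem_insert, hT2, Set.mem_insert_iff]
          rw [hTF, Finset.sum_insert (by
            simp only [Set.Finite.mem_toFinset]
            rintro ⟨h, -⟩
            exact hx2 h)]
          ring
        have hwt' : wtB c Θ'.1 + wtB c Θ'.2 ≤ N := by omega
        obtain ⟨C, hC1, hC2⟩ := ih Θ' hinv' hf1' hf2' hwt'
        exact ⟨C, Relation.ReflTransGen.head (Or.inr ⟨x, hx1, hx2, rfl⟩) hC1, hC2⟩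
    · exact ⟨Θ, Relation.ReflTransGen.refl, hch⟩


lemma isBetaSet_swap {X : Set ℤ} (hX : IsBetaSet X) (u v : ℤ) :
    IsBetaSet ((X \ {u}) ∪ {v}) := by
  obtain ⟨⟨c, hc⟩, ⟨C, hC⟩⟩ := hX
  constructor
  · refine ⟨min c u, fun z hz => Or.inl ⟨hc z (by omega), ?_⟩⟩
    simp only [Set.mem_singleton_iff]; omega
  · refine ⟨max C (v + 1), fun z hz => ?_⟩
    simp only [max_le_iff] at hz
    rintro (⟨h1, -⟩ | h1)
    · exact hC z (by omega) h1
    · simp only [Set.mem_singleton_iff] at h1; omega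


end Stmt13Aux

set_option maxHeartbeats 1000000 in
/-- Swapping an `∧` at position `p` with a `∨` at position `q > p`
in the up-down diagram of a `d`-small symbol `Θ` (moving the bead `m+p` of the right
row to `m+q`, and the bead `m+q-kd-d/2` of the left row to `m+p-kd-d/2`) yields a
symbol `Θ'` which is `d`-small with the same defining intervals, has the same charge
and rank, whose up-down diagram is that of `Θ` with positions `p` and `q` exchanged,
and which is obtained from `Θ` by removing `2k+1` `d/2`-cohooks followed by `2k+1`
operations inverse to `d/2`-cohook removals; in particular `Θ` and `Θ'` have
`d/2`-cocores agreeing up to interchanging the two rows. -/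
theorem stmt13 (d : ℤ) (hd : 2 ≤ d) (hdE : Even d)
    (X₁ X₂ : Set ℤ) (hX₁ : IsBetaSet X₁) (hX₂ : IsBetaSet X₂)
    (a₁ b₁ a₂ b₂ : ℤ) (hsm : IsDSmallWith d X₁ X₂ a₁ b₁ a₂ b₂)
    (k : ℕ) (hmid : middleLen d b₁ b₂ = (k : ℤ) * d)
    (p q : ℤ) (hp : 1 ≤ p) (hpq : p < q) (hq : q ≤ d / 2)
    (hwp : wud d X₁ X₂ b₁ b₂ p = UD.up) (hwq : wud d X₁ X₂ b₁ b₂ q = UD.dn)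
    (m : ℤ) (hm : m = max b₁ b₂ - d / 2)
    (Yr Yl Y₁ Y₂ : Set ℤ)
    (hYr : Yr = (rightSet X₁ X₂ b₁ b₂ \ {m + p}) ∪ {m + q})
    (hYl : Yl = (leftSet X₁ X₂ b₁ b₂ \ {m + q - (k : ℤ) * d - d / 2}) ∪
      {m + p - (k : ℤ) * d - d / 2})
    (hY₁ : Y₁ = if b₁ < b₂ then Yl else Yr)
    (hY₂ : Y₂ = if b₁ < b₂ then Yr else Yl) :
    IsDSmallWith d Y₁ Y₂ a₁ b₁ a₂ b₂ ∧
    chargeB Y₁ = chargeB X₁ ∧ chargeB Y₂ = chargeB X₂ ∧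
    sizeB Y₁ + sizeB Y₂ = sizeB X₁ + sizeB X₂ ∧
    (∀ i : ℤ, 1 ≤ i → i ≤ d / 2 →
      wud d Y₁ Y₂ b₁ b₂ i =
        if i = p then wud d X₁ X₂ b₁ b₂ q
        else if i = q then wud d X₁ X₂ b₁ b₂ p
        else wud d X₁ X₂ b₁ b₂ i) ∧
    (∃ Z : Set ℤ × Set ℤ, RelPow (RemoveCohook (d / 2)) (2 * k + 1) (X₁, X₂) Z ∧
      RelPow (fun A B => RemoveCohook (d / 2) B A) (2 * k + 1) Z (Y₁, Y₂)) ∧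
    (∃ C C' : Set ℤ × Set ℤ, IsCocoreOf (d / 2) (X₁, X₂) C ∧
      IsCocoreOf (d / 2) (Y₁, Y₂) C' ∧ (C' = C ∨ C' = (C.2, C.1))) := by
  set E := d / 2 with hE
  have hE1 : 1 ≤ E := by omega
  have hd2 : d = 2 * E := by
    obtain ⟨t, ht⟩ := hdE
    omega
  set Δ : ℤ := (k : ℤ) * d + E with hΔ
  have hkd0 : 0 ≤ (k : ℤ) * d := mul_nonneg (Int.ofNat_nonneg k) (by omega)
  have hΔ1 : E ≤ Δ := by rw [hΔ]; omega
  have hkd2E : (k : ℤ) * d = 2 * (k : ℤ) * E := by rw [hd2]; ring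
  have hΔE : Δ = (2 * (k : ℤ) + 1) * E := by rw [hΔ, hd2]; ring
  set Xr := rightSet X₁ X₂ b₁ b₂ with hXr
  set Xl := leftSet X₁ X₂ b₁ b₂ with hXl
  have habs : |b₂ - b₁| = Δ := by
    unfold middleLen at hmid
    rw [hΔ]
    rw [← hE] at hmid
    linarith
  have habs' : |b₂ - b₁| = max b₁ b₂ - min b₁ b₂ := by
    rcases le_total b₁ b₂ with h | h
    · rw [abs_of_nonneg (by omega)]; omega
    · rw [abs_of_nonpos (by omega)]; omega
  have hmax : max b₁ b₂ = m + E := by omega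
  have hmin : min b₁ b₂ = m - (k : ℤ) * d := by
    rw [habs] at habs'
    rw [hΔ] at habs'
    omega
  -- basic facts about Xr, Xl
  have hXrβ : IsBetaSet Xr := by
    rw [hXr]; unfold rightSet; split_ifs; exacts [hX₂, hX₁]
  have hXlβ : IsBetaSet Xl := by
    rw [hXl]; unfold leftSet; split_ifs; exacts [hX₁, hX₂]
  have htopr : topB Xr ≤ max b₁ b₂ := by
    rw [hXr]; unfold rightSet; split_ifs
    exacts [hsm.top₂.trans (le_max_right _ _), hsm.top₁.trans (le_max_left _ _)]
  have htopl : topB Xl ≤ min b₁ b₂ := by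
    rw [hXl]; unfold leftSet; split_ifs with h
    · exact hsm.top₁.trans (by omega)
    · exact hsm.top₂.trans (by omega)
  have hbotr : m + 1 ≤ botB Xr := by
    rw [hXr]; unfold rightSet; split_ifs with h
    · refine le_trans ?_ hsm.bot₂
      have := hsm.len₂; rw [← hE] at this; omega
    · refine le_trans ?_ hsm.bot₁
      have := hsm.len₁; rw [← hE] at this; omega
  have hbotl : min b₁ b₂ - E + 1 ≤ botB Xl := by
    rw [hXl]; unfold leftSet; split_ifs with h
    · refine le_trans ?_ hsm.bot₁
      have := hsm.len₁; rw [← hE] at this; omega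
    · refine le_trans ?_ hsm.bot₂
      have := hsm.len₂; rw [← hE] at this; omega
  have hXrlow : ∀ w : ℤ, w ≤ m → w ∈ Xr := fun w hw => botB_mem hXrβ w (by omega)
  have hXlhigh : ∀ w : ℤ, min b₁ b₂ < w → w ∉ Xl :=
    fun w hw => notMem_of_topB_lt hXlβ (by omega)
  have hXllow : ∀ w : ℤ, w ≤ min b₁ b₂ - E → w ∈ Xl := fun w hw => botB_mem hXlβ w (by omega)
  -- decode the up-down letters at p and q
  have hwp' := hwp
  have hwq' := hwq
  unfold wud at hwp' hwq'
  rw [← hE, ← hXr, ← hXl, habs, ← hm] at hwp' hwq'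
  have hpXr : m + p ∈ Xr ∧ m + p - Δ ∉ Xl := by
    split_ifs at hwp' with h1 h2 h2
    all_goals first
      | exact ⟨h1, h2⟩
      | exact absurd hwp' (by decide)
  have hqX : m + q ∉ Xr ∧ m + q - Δ ∈ Xl := by
    split_ifs at hwq' with h1 h2 h2
    all_goals first
      | exact ⟨h1, h2⟩
      | exact absurd hwq' (by decide)
  obtain ⟨hpXr, hpXl⟩ := hpXr
  obtain ⟨hqXr, hqXl⟩ := hqX
  -- rewrite Yl in terms of Δ
  have hqd : m + q - (k : ℤ) * d - E = m + q - Δ := by rw [hΔ]; ring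
  have hpd : m + p - (k : ℤ) * d - E = m + p - Δ := by rw [hΔ]; ring
  rw [hqd, hpd] at hYl
  -- beta facts for Yr, Yl
  have hYrβ : IsBetaSet Yr := hYr ▸ isBetaSet_swap hXrβ _ _
  have hYlβ : IsBetaSet Yl := hYl ▸ isBetaSet_swap hXlβ _ _
  have hYrlow : ∀ w : ℤ, w ≤ m → w ∈ Yr := by
    intro w hw
    rw [hYr]
    exact Or.inl ⟨hXrlow w hw, by simp only [Set.mem_singleton_iff]; omega⟩
  have htopYr : topB Yr ≤ max b₁ b₂ := by
    apply csSup_le ⟨m + q, hYr ▸ Or.inr rfl⟩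
    rintro x hx
    rw [hYr] at hx
    rcases hx with ⟨h1, -⟩ | h1
    · exact (mem_le_topB hXrβ h1).trans htopr
    · simp only [Set.mem_singleton_iff] at h1; omega
  have hbotYr : m + 1 ≤ botB Yr := le_botB hYrβ (fun w hw => hYrlow w (by omega))
  have htopYl : topB Yl ≤ min b₁ b₂ := by
    apply csSup_le ⟨m + p - Δ, hYl ▸ Or.inr rfl⟩
    rintro x hx
    rw [hYl] at hx
    rcases hx with ⟨h1, -⟩ | h1
    · exact (mem_le_topB hXlβ h1).trans (le_refl _ |>.trans (by omega))
    · simp only [Set.mem_singleton_iff] at h1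
      rw [hΔ] at h1
      omega
  have hbotYl : min b₁ b₂ - E + 1 ≤ botB Yl := by
    apply le_botB hYlβ
    intro w hw
    rw [hYl]
    refine Or.inl ⟨hXllow w (by omega), ?_⟩
    simp only [Set.mem_singleton_iff]
    rw [hΔ]
    omega
  -- component identifications
  have hXid : (b₁ < b₂ → X₁ = Xl ∧ X₂ = Xr) ∧ (¬ b₁ < b₂ → X₁ = Xr ∧ X₂ = Xl) := by
    constructor <;> intro h <;>
      constructor <;> simp [hXr, hXl, rightSet, leftSet, h]
  have hZC : (∃ Z : Set ℤ × Set ℤ, RelPow (RemoveCohook E) (2 * k + 1) (X₁, X₂) Z ∧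
      RelPow (fun A B => RemoveCohook E B A) (2 * k + 1) Z (Y₁, Y₂)) ∧
      (∃ C C' : Set ℤ × Set ℤ, IsCocoreOf E (X₁, X₂) C ∧
      IsCocoreOf E (Y₁, Y₂) C' ∧ (C' = C ∨ C' = (C.2, C.1))) := by
    -- cascades
    have hpE : p ≤ E - 1 := by omega
    set zp : ℕ → ℤ := fun c => m + p - (c : ℤ) * E with hzp
    have hzpv : ∀ c : ℕ, zp c = m + p - (c : ℤ) * E := fun c => rfl
    have hzp0 : zp 0 = m + p := by rw [hzpv]; push_cast; ring
    have hzpD : zp (2 * k + 1) = m + p - Δ := by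
      rw [hzpv, hΔE]; push_cast; ring
    have hzpz : ∀ c : ℕ, zp c = zp 0 - (c : ℤ) * E := by
      intro c; rw [hzpv, hzp0]
    have hzpA : ∀ c : ℕ, 1 ≤ c → c ≤ 2 * k + 1 → zp c ∈ Xr := by
      intro c hc1 hc2
      have h1 : (1 : ℤ) ≤ (c : ℤ) := by exact_mod_cast hc1
      have h2 : E ≤ (c : ℤ) * E := le_mul_of_one_le_left (by omega) h1
      exact hXrlow _ (by rw [hzpv]; omega)
    have hzpB : ∀ c : ℕ, 1 ≤ c → c ≤ 2 * k + 1 → zp c ∉ Xl := by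
      intro c hc1 hc2
      by_cases hceq : c = 2 * k + 1
      · subst hceq; rw [hzpD]; exact hpXl
      · have hc2' : (c : ℤ) ≤ 2 * (k : ℤ) := by exact_mod_cast (by omega : c ≤ 2 * k)
        apply hXlhigh
        have h2 : (c : ℤ) * E ≤ 2 * (k : ℤ) * E := mul_le_mul_of_nonneg_right hc2' (by omega)
        rw [hzpv, hmin]
        linarith [hkd2E]
    obtain ⟨hchainX1, hchainX2⟩ := cascade E hE1 k Xr Xl zp hzpz (by rw [hzp0]; exact hpXr) hzpA hzpB
    rw [hzp0, hzpD] at hchainX1 hchainX2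
    set zq : ℕ → ℤ := fun c => m + q - (c : ℤ) * E with hzq
    have hzqv : ∀ c : ℕ, zq c = m + q - (c : ℤ) * E := fun c => rfl
    have hzq0 : zq 0 = m + q := by rw [hzqv]; push_cast; ring
    have hzqD : zq (2 * k + 1) = m + q - Δ := by
      rw [hzqv, hΔE]; push_cast; ring
    have hzqz : ∀ c : ℕ, zq c = zq 0 - (c : ℤ) * E := by
      intro c; rw [hzqv, hzq0]
    have hzqA : ∀ c : ℕ, 1 ≤ c → c ≤ 2 * k + 1 → zq c ∈ Yr := by
      intro c hc1 hc2
      have h1 : (1 : ℤ) ≤ (c : ℤ) := by exact_mod_cast hc1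
      have h2 : E ≤ (c : ℤ) * E := le_mul_of_one_le_left (by omega) h1
      have h3 : zq c ≤ m := by rw [hzqv]; omega
      rw [hYr]
      exact Or.inl ⟨hXrlow _ h3, by simp only [Set.mem_singleton_iff]; omega⟩
    have hzqB : ∀ c : ℕ, 1 ≤ c → c ≤ 2 * k + 1 → zq c ∉ Yl := by
      intro c hc1 hc2
      rw [hYl]
      by_cases hceq : c = 2 * k + 1
      · subst hceq
        rw [hzqD]
        rintro (⟨-, h⟩ | h)
        · exact h rfl
        · simp only [Set.mem_singleton_iff] at h; omega
      · have hc2' : (c : ℤ) ≤ 2 * (k : ℤ) := by exact_mod_cast (by omega : c ≤ 2 * k)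
        have h2 : (c : ℤ) * E ≤ 2 * (k : ℤ) * E := mul_le_mul_of_nonneg_right hc2' (by omega)
        have hgt : min b₁ b₂ < zq c := by
          rw [hzqv, hmin]
          linarith [hkd2E]
        rintro (⟨h, -⟩ | h)
        · exact hXlhigh _ hgt h
        · simp only [Set.mem_singleton_iff] at h
          rw [hzqv] at h
          rw [hΔ] at h
          have := hkd2E
          omega
    obtain ⟨hchainY1, hchainY2⟩ := cascade E hE1 k Yr Yl zq hzqz (by rw [hzq0, hYr]; exact Or.inr rfl) hzqA hzqB
    rw [hzq0, hzqD] at hchainY1 hchainY2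
    have hZr : Yr \ {m + q} = Xr \ {m + p} := by
      rw [hYr]
      ext y
      simp only [Set.mem_diff, Set.mem_union, Set.mem_singleton_iff]
      constructor
      · rintro ⟨⟨h1, h2⟩ | h1, h3⟩
        · exact ⟨h1, h2⟩
        · exact absurd h1 h3
      · rintro ⟨h1, h2⟩
        exact ⟨Or.inl ⟨h1, h2⟩, fun hy => hqXr (hy ▸ h1)⟩
    have hZl : Yl ∪ {m + q - Δ} = Xl ∪ {m + p - Δ} := by
      rw [hYl]
      ext y
      simp only [Set.mem_union, Set.mem_diff, Set.mem_singleton_iff]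
      constructor
      · rintro ((⟨h1, -⟩ | h1) | h1)
        · exact Or.inl h1
        · exact Or.inr h1
        · exact Or.inl (h1 ▸ hqXl)
      · rintro (h1 | h1)
        · by_cases hy : y = m + q - Δ
          · exact Or.inr hy
          · exact Or.inl (Or.inl ⟨h1, hy⟩)
        · exact Or.inl (Or.inr h1)
    rw [hZr, hZl] at hchainY1 hchainY2
    constructor
    · -- the chain through Z
      rcases lt_or_ge b₁ b₂ with h | h
      · refine ⟨(Xr \ {m + p}, Xl ∪ {m + p - Δ}), ?_, ?_⟩
        · rw [(hXid.1 h).1, (hXid.1 h).2]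
          exact hchainX2
        · rw [hY₁, if_pos h, hY₂, if_pos h]
          exact relPow_rev hchainY2
      · refine ⟨(Xl ∪ {m + p - Δ}, Xr \ {m + p}), ?_, ?_⟩
        · rw [(hXid.2 (by omega)).1, (hXid.2 (by omega)).2]
          exact hchainX1
        · rw [hY₁, if_neg (by omega), hY₂, if_neg (by omega)]
          exact relPow_rev hchainY1
    · -- cocores
      set c₀ := min (min (botB Xr) (botB Xl)) (m + p - Δ) with hc₀
      have hc₀Xr : ∀ w : ℤ, w < c₀ → w ∈ Xr \ {m + p} := by
        intro w hw
        refine ⟨botB_mem hXrβ w (by omega), ?_⟩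
        simp only [Set.mem_singleton_iff]
        omega
      have hc₀Xl : ∀ w : ℤ, w < c₀ → w ∈ Xl ∪ {m + p - Δ} :=
        fun w hw => Or.inl (botB_mem hXlβ w (by omega))
      have ffr : ((Xr \ {m + p}) ∩ Set.Ici c₀).Finite := by
        apply (Set.finite_Icc c₀ (topB Xr)).subset
        rintro x ⟨⟨h1, -⟩, h2⟩
        exact ⟨by simpa using h2, mem_le_topB hXrβ h1⟩
      have ffl : ((Xl ∪ {m + p - Δ}) ∩ Set.Ici c₀).Finite := by
        apply (Set.finite_Icc c₀ (max (topB Xl) (m + p - Δ))).subset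
        rintro x ⟨h1 | h1, h2⟩
        · exact ⟨by simpa using h2, (mem_le_topB hXlβ h1).trans (le_max_left _ _)⟩
        · simp only [Set.mem_singleton_iff] at h1
          exact ⟨by simpa using h2, h1 ▸ le_max_right _ _⟩
      rcases lt_or_ge b₁ b₂ with h | h
      · obtain ⟨C, hC1, hC2⟩ := cocore_exists E hE1 c₀
          (wtB c₀ (Xr \ {m + p}) + wtB c₀ (Xl ∪ {m + p - Δ}))
          (Xr \ {m + p}, Xl ∪ {m + p - Δ})
          (fun w hw => ⟨hc₀Xr w hw, hc₀Xl w hw⟩) ffr ffl le_rfl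
        refine ⟨C, C, ⟨?_, hC2⟩, ⟨?_, hC2⟩, Or.inl rfl⟩
        · refine Relation.ReflTransGen.trans ?_ hC1
          apply relPow_reflTransGen
          rw [(hXid.1 h).1, (hXid.1 h).2]
          exact hchainX2
        · refine Relation.ReflTransGen.trans ?_ hC1
          apply relPow_reflTransGen
          rw [hY₁, if_pos h, hY₂, if_pos h]
          exact hchainY2
      · obtain ⟨C, hC1, hC2⟩ := cocore_exists E hE1 c₀
          (wtB c₀ (Xl ∪ {m + p - Δ}) + wtB c₀ (Xr \ {m + p}))
          (Xl ∪ {m + p - Δ}, Xr \ {m + p})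
          (fun w hw => ⟨hc₀Xl w hw, hc₀Xr w hw⟩) ffl ffr le_rfl
        refine ⟨C, C, ⟨?_, hC2⟩, ⟨?_, hC2⟩, Or.inl rfl⟩
        · refine Relation.ReflTransGen.trans ?_ hC1
          apply relPow_reflTransGen
          rw [(hXid.2 (by omega)).1, (hXid.2 (by omega)).2]
          exact hchainX1
        · refine Relation.ReflTransGen.trans ?_ hC1
          apply relPow_reflTransGen
          rw [hY₁, if_neg (by omega), hY₂, if_neg (by omega)]
          exact hchainY1

  refine ⟨?_, ?_, ?_, ?_, ?_, hZC.1, hZC.2⟩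
  · -- IsDSmallWith
    have hl1 := hsm.len₁
    have hl2 := hsm.len₂
    rw [← hE] at hl1 hl2
    refine ⟨hsm.len₁, hsm.len₂, ?_, ?_, ?_, ?_, hsm.cong⟩
    · rcases lt_or_ge b₁ b₂ with h | h
      · rw [hY₁, if_pos h]
        refine le_trans ?_ hbotYl
        omega
      · rw [hY₁, if_neg (by omega)]
        refine le_trans ?_ hbotYr
        omega
    · rcases lt_or_ge b₁ b₂ with h | h
      · rw [hY₂, if_pos h]
        refine le_trans ?_ hbotYr
        omega
      · rw [hY₂, if_neg (by omega)]
        refine le_trans ?_ hbotYl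
        omega
    · rcases lt_or_ge b₁ b₂ with h | h
      · rw [hY₁, if_pos h]
        exact htopYl.trans (by omega)
      · rw [hY₁, if_neg (by omega)]
        exact htopYr.trans (by omega)
    · rcases lt_or_ge b₁ b₂ with h | h
      · rw [hY₂, if_pos h]
        exact htopYr.trans (by omega)
      · rw [hY₂, if_neg (by omega)]
        exact htopYl.trans (by omega)
  · -- chargeB Y₁ = chargeB X₁
    rcases lt_or_ge b₁ b₂ with h | h
    · rw [hY₁, if_pos h, (hXid.1 h).1, hYl]
      exact (charge_size_swap hXlβ hqXl hpXl).1
    · rw [hY₁, if_neg (by omega), (hXid.2 (by omega)).1, hYr]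
      exact (charge_size_swap hXrβ hpXr hqXr).1
  · -- chargeB Y₂ = chargeB X₂
    rcases lt_or_ge b₁ b₂ with h | h
    · rw [hY₂, if_pos h, (hXid.1 h).2, hYr]
      exact (charge_size_swap hXrβ hpXr hqXr).1
    · rw [hY₂, if_neg (by omega), (hXid.2 (by omega)).2, hYl]
      exact (charge_size_swap hXlβ hqXl hpXl).1
  · -- sizes
    have h1 := (charge_size_swap hXrβ hpXr hqXr).2
    have h2 := (charge_size_swap hXlβ hqXl hpXl).2
    rw [← hYr] at h1
    rw [← hYl] at h2
    have : (sizeB Yr : ℤ) + sizeB Yl = sizeB Xr + sizeB Xl := by linarith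
    rcases lt_or_ge b₁ b₂ with h | h
    · rw [hY₁, if_pos h, hY₂, if_pos h, (hXid.1 h).1, (hXid.1 h).2]
      omega
    · rw [hY₁, if_neg (by omega), hY₂, if_neg (by omega),
        (hXid.2 (by omega)).1, (hXid.2 (by omega)).2]
      omega
  · -- up-down diagram
    intro i hi1 hi2
    have hrY : rightSet Y₁ Y₂ b₁ b₂ = Yr := by
      unfold rightSet; split_ifs with h
      · rw [hY₂, if_pos h]
      · rw [hY₁, if_neg h]
    have hlY : leftSet Y₁ Y₂ b₁ b₂ = Yl := by
      unfold leftSet; split_ifs with h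
      · rw [hY₁, if_pos h]
      · rw [hY₂, if_neg h]
    unfold wud
    rw [← hE, ← hXr, ← hXl, hrY, hlY, habs, ← hm]
    by_cases hip : i = p
    · subst hip
      rw [if_pos rfl]
      have hn1 : m + i ∉ Yr := by
        rw [hYr]
        rintro (⟨-, h⟩ | h)
        · exact h rfl
        · simp only [Set.mem_singleton_iff] at h; omega
      have hn2 : m + i - Δ ∈ Yl := hYl ▸ Or.inr rfl
      rw [if_neg hn1, if_pos hn2]
      exact hwq'.symm
    · rw [if_neg hip]
      by_cases hiq : i = q
      · subst hiq
        rw [if_pos rfl]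
        have hn1 : m + i ∈ Yr := hYr ▸ Or.inr rfl
        have hn2 : m + i - Δ ∉ Yl := by
          rw [hYl]
          rintro (⟨-, h⟩ | h)
          · exact h rfl
          · simp only [Set.mem_singleton_iff] at h; omega
        rw [if_pos hn1, if_neg hn2]
        exact hwp'.symm
      · rw [if_neg hiq]
        have he1 : (m + i ∈ Yr) = (m + i ∈ Xr) := by
          apply propext
          rw [hYr]
          constructor
          · rintro (⟨h, -⟩ | h)
            · exact h
            · simp only [Set.mem_singleton_iff] at h; omega
          · intro h
            exact Or.inl ⟨h, by simp only [Set.mem_singleton_iff]; omega⟩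
        have he2 : (m + i - Δ ∈ Yl) = (m + i - Δ ∈ Xl) := by
          apply propext
          rw [hYl]
          constructor
          · rintro (⟨h, -⟩ | h)
            · exact h
            · simp only [Set.mem_singleton_iff] at h; omega
          · intro h
            exact Or.inl ⟨h, by simp only [Set.mem_singleton_iff]; omega⟩
        rw [he1, he2]
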